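/- arXiv:1907.12229 — 3 statements merged into one kernel-verified Lean document; each statement's English description precedes it below -/
import Mathlib

section
/- Let n ≥ 2 and let L be an n×n real matrix with all column sums equal to zero, and let C_{ij} denote the (i,j) cofactor of L. Then the vector (C_{11}, C_{22}, …, C_{nn})ᵀ of diagonal cofactors lies in the kernel of L, i.e., L·(C_{11},…,C_{nn})ᵀ = 0. -/
open Matrix Filter Set Topology

/-- A square matrix is irreducible if it is not permutation-similar to a nontrivial block
upper triangular matrix; equivalently, for every nonempty proper subset `S` of indices there
are `i ∈ S` and `j ∉ S` with `A i j ≠ 0`. -/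
def IsIrreducibleMatrix {n : ℕ} (A : Matrix (Fin n) (Fin n) ℝ) : Prop :=
  ∀ S : Set (Fin n), S.Nonempty → S ≠ Set.univ → ∃ i ∈ S, ∃ j ∈ Sᶜ, A i j ≠ 0

/-- The spectral bound of a real square matrix: the maximum of the real parts of its
(complex) eigenvalues, i.e. of the roots of its characteristic polynomial over `ℂ`. -/
noncomputable def spectralBound {n : ℕ} (A : Matrix (Fin n) (Fin n) ℝ) : ℝ :=
  sSup {x : ℝ | ∃ μ : ℂ, ((A.map Complex.ofReal).charpoly).IsRoot μ ∧ μ.re = x}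

/-- The spectral radius of a real square matrix: the maximum modulus of its (complex)
eigenvalues, i.e. of the roots of its characteristic polynomial over `ℂ`. -/
noncomputable def specRad {n : ℕ} (A : Matrix (Fin n) (Fin n) ℝ) : ℝ :=
  sSup {x : ℝ | ∃ μ : ℂ, ((A.map Complex.ofReal).charpoly).IsRoot μ ∧ ‖μ‖ = x}

/-- The `(i,j)` cofactor of a square matrix: `(-1)^(i+j)` times the determinant of the
matrix obtained by deleting row `i` and column `j`. -/
noncomputable def cofactor {n : ℕ} (A : Matrix (Fin (n+1)) (Fin (n+1)) ℝ) (i j : Fin (n+1)) : ℝ :=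
  (-1 : ℝ) ^ ((i : ℕ) + (j : ℕ)) * (A.submatrix i.succAbove j.succAbove).det

/- The cofactors are the entries of the transposed adjugate. Since the rows of `A` sum to zero,
replacing row `k` of `A.updateRow j u` by the sum of the other rows, which is `-A j`, leaves the
determinant unchanged; swapping rows `j` and `k` then gives `A.updateRow k u`, the two sign
changes cancelling. So every row of `adjugate A` is constant, and the diagonal of `adjugate A`
equals each of its columns, which `A` kills because `A * adjugate A = det A • 1 = 0`. -/

namespace Matrix

variable {n R : Type*} [Fintype n] [DecidableEq n] [CommRing R]

theorem det_eq_zero_of_sum_rows_eq_zero [Nonempty n] {A : Matrix n n R} (hA : ∑ i, A i = 0) :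
    A.det = 0 := by
  inhabit n
  have h := det_updateRow_sum A default 1
  simp only [Pi.one_apply, one_smul, hA] at h
  rw [← h, det_eq_zero_of_row_eq_zero default (by simp)]

theorem det_updateRow_updateRow_swap {A : Matrix n n R} {j k : n} (hjk : j ≠ k) (u : n → R) :
    ((A.updateRow j u).updateRow k (A j)).det = -(A.updateRow k u).det := by
  have hswap : (A.updateRow k u).submatrix (Equiv.swap j k) id
      = (A.updateRow j u).updateRow k (A j) := by
    ext r c
    rcases eq_or_ne r j with rfl | hrj
    · simp [hjk]
    rcases eq_or_ne r k with rfl | hrk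
    · simp [hjk]
    · simp [Equiv.swap_apply_of_ne_of_ne hrj hrk, hrj, hrk]
  rw [← hswap, det_permute, Equiv.Perm.sign_swap hjk]
  simp

theorem det_updateRow_eq_of_sum_rows_eq_zero {A : Matrix n n R} (hA : ∑ i, A i = 0)
    (u : n → R) (j k : n) : (A.updateRow j u).det = (A.updateRow k u).det := by
  rcases eq_or_ne j k with rfl | hjk
  · rfl
  have hsum : ∑ r, (1 - Pi.single j 1 : n → R) r • (A.updateRow j u) r = -A j :=
    calc ∑ r, (1 - Pi.single j 1 : n → R) r • (A.updateRow j u) r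
        = ∑ r ∈ Finset.univ.erase j, A r := by
          rw [← Finset.sum_erase Finset.univ (a := j) (by simp)]
          refine Finset.sum_congr rfl fun r hr => ?_
          simp [Finset.ne_of_mem_erase hr]
      _ = -A j := by
          rw [eq_neg_iff_add_eq_zero,
            Finset.sum_erase_add (f := fun r => A r) _ (Finset.mem_univ j), hA]
  calc (A.updateRow j u).det = ((A.updateRow j u).updateRow k (-A j)).det := by
        rw [← hsum, det_updateRow_sum]
        simp [hjk.symm]
    _ = (A.updateRow k u).det := by
        rw [← neg_one_smul R (A j), det_updateRow_smul, det_updateRow_updateRow_swap hjk]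
        ring

theorem adjugate_apply_eq_of_sum_rows_eq_zero {A : Matrix n n R} (hA : ∑ i, A i = 0)
    (i j k : n) : adjugate A i j = adjugate A i k := by
  simp only [adjugate_apply]
  exact det_updateRow_eq_of_sum_rows_eq_zero hA _ j k

theorem mulVec_diag_adjugate_eq_zero {A : Matrix n n R} (hA : ∑ i, A i = 0) :
    A *ᵥ (fun i => adjugate A i i) = 0 := by
  funext r
  have : Nonempty n := ⟨r⟩
  calc (A *ᵥ fun i => adjugate A i i) r = (A * adjugate A) r r := by
        simp only [mulVec, dotProduct, mul_apply]
        congr with j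
        rw [adjugate_apply_eq_of_sum_rows_eq_zero hA j j r]
    _ = 0 := by simp [mul_adjugate, det_eq_zero_of_sum_rows_eq_zero hA]

end Matrix

theorem cofactor_eq_adjugate {n : ℕ} (A : Matrix (Fin (n+1)) (Fin (n+1)) ℝ) (i j : Fin (n+1)) :
    cofactor A i j = adjugate A j i := by
  rw [adjugate_fin_succ_eq_det_submatrix, cofactor]

theorem mulVec_diag_cofactor_eq_zero_general {n : ℕ}
    (L : Matrix (Fin (n+1)) (Fin (n+1)) ℝ)
    (hcol : ∀ j, ∑ i, L i j = 0) :
    L *ᵥ (fun i => cofactor L i i) = 0 := by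
  have hrows : ∑ i, L i = 0 := funext fun j => (Finset.sum_apply j _ fun i => L i).trans (hcol j)
  simpa only [cofactor_eq_adjugate] using mulVec_diag_adjugate_eq_zero hrows

/-- For a square matrix with zero column sums, the vector of diagonal cofactors
lies in the kernel of `L`: `L·(C_{11},…,C_{nn})ᵀ = 0`. -/
theorem mulVec_diag_cofactor_eq_zero {n : ℕ} (hn : 1 ≤ n)
    (L : Matrix (Fin (n+1)) (Fin (n+1)) ℝ)
    (hcol : ∀ j, ∑ i, L i j = 0) :
    L *ᵥ (fun i => cofactor L i i) = 0 :=
  mulVec_diag_cofactor_eq_zero_general L hcol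
end

section
/- Let n ≥ 2, let L be an n×n real matrix that is essentially nonnegative (all off-diagonal entries nonnegative), irreducible, and has all column sums equal to zero, let γ_i > 0 for i = 1,…,n, and set D = diag(γ_1,…,γ_n) and V(d) = D − d·L (which is invertible for all d ≥ 0). Let adj(L) denote the adjugate of L and C_{ii} its diagonal cofactors. Then, entrywise, V(d)⁻¹ converges as d → ∞ to the matrix V∞⁻¹ := (1 / Σ_{i=1}^n γ_i·C_{ii}) · adj(L); moreover this limit matrix has all entries strictly positive and has rank one. -/
/-! Since the columns of `L` sum to zero, `𝟙ᵀ (D - d • L) = γᵀ`, so multiplying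
`(D - d • L) * adj (D - d • L) = det (D - d • L) • 1` on the left by `𝟙ᵀ` gives
`det (D - d • L) = ∑ k, γ k * adj (D - d • L) k j` for every `j`. Thus `(D - d • L)⁻¹ i j` is a
quotient of adjugate entries which is invariant under scaling the matrix; writing
`D - d • L = (-d) • (L - d⁻¹ • D)` it becomes a function of `d⁻¹` that is continuous at `0`, with
value `adj L i j / ∑ k, γ k * adj L k j`.

A maximum principle along the irreducible `L` shows that a left null vector of `L` vanishing
at one index vanishes identically. Hence the principal minors `C i i` of `L` are nonzero and the
rows of `adj L` are constant, i.e. `adj L = c 𝟙ᵀ` with `c i = C i i` and `L *ᵥ c = 0`. Summing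
`L *ᵥ c = 0` over `{c > 0}` and using irreducibility once more shows that `c` has constant sign,
so the limit `c 𝟙ᵀ / ∑ k, γ k * c k` is positive and has rank one. -/

open Matrix Filter Set Topology

theorem Matrix.det_eq_sum_colSum_mul_adjugate {ι R : Type*} [Fintype ι] [DecidableEq ι]
    [CommRing R] (A : Matrix ι ι R) (j : ι) :
    A.det = ∑ k, (∑ i, A i k) * A.adjugate k j := by
  have h := congrFun (congrArg (fun B => (fun _ => (1 : R)) ᵥ* B) (mul_adjugate A)) j
  simp only [← vecMul_vecMul, vecMul_smul, vecMul_one] at h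
  simpa [vecMul, dotProduct] using h.symm

theorem Matrix.det_eq_zero_of_colSum_eq_zero {ι R : Type*} [Fintype ι] [DecidableEq ι]
    [CommRing R] [Nonempty ι] {A : Matrix ι ι R} (hcol : ∀ j, ∑ i, A i j = 0) : A.det = 0 := by
  simp [A.det_eq_sum_colSum_mul_adjugate (Classical.arbitrary ι), hcol]

theorem Matrix.inv_apply_eq_div_sum_colSum_mul_adjugate {ι K : Type*} [Fintype ι] [DecidableEq ι]
    [Field K] (A : Matrix ι ι K) (i j : ι) :
    A⁻¹ i j = A.adjugate i j / ∑ k, (∑ l, A l k) * A.adjugate k j := by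
  rw [← A.det_eq_sum_colSum_mul_adjugate, inv_def, Ring.inverse_eq_inv', smul_apply, smul_eq_mul,
    div_eq_inv_mul]

theorem Matrix.rank_vecMulVec_eq_one {m n K : Type*} [Fintype m] [Fintype n] [Field K]
    {w : m → K} {v : n → K} (hw : w ≠ 0) (hv : v ≠ 0) : (vecMulVec w v).rank = 1 := by
  classical
  refine le_antisymm (rank_vecMulVec_le w v) (Nat.one_le_iff_ne_zero.2 fun h => ?_)
  obtain ⟨i, hi⟩ := Function.ne_iff.1 hw
  obtain ⟨j, hj⟩ := Function.ne_iff.1 hv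
  rw [rank, Submodule.finrank_eq_zero, LinearMap.range_eq_bot] at h
  have h0 := congrFun (LinearMap.congr_fun h (Pi.single j 1)) i
  simp only [mulVecLin_apply, mulVec_single_one, LinearMap.zero_apply, Pi.zero_apply] at h0
  exact mul_ne_zero hi hj h0

theorem cofactor_eq_adjugate_apply {n : ℕ} (A : Matrix (Fin (n+1)) (Fin (n+1)) ℝ)
    (i j : Fin (n+1)) : cofactor A i j = A.adjugate j i := by
  rw [cofactor, adjugate_fin_succ_eq_det_submatrix]

section EssentiallyNonnegative

variable {m : ℕ} {L : Matrix (Fin m) (Fin m) ℝ}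

theorem nonpos_of_vecMul_eq_zero_of_ne (hess : ∀ i j, i ≠ j → 0 ≤ L i j)
    (hirr : IsIrreducibleMatrix L) (hcol : ∀ j, ∑ i, L i j = 0) {y : Fin m → ℝ} {i : Fin m}
    (hyi : y i = 0) (hy : ∀ c, c ≠ i → (y ᵥ* L) c = 0) (k : Fin m) : y k ≤ 0 := by
  by_contra! hk
  obtain ⟨b, -, hb⟩ := Finset.exists_max_image Finset.univ y ⟨k, Finset.mem_univ k⟩
  have hmax : ∀ l, y l ≤ y b := fun l => hb l (Finset.mem_univ l)
  set S : Set (Fin m) := {a | y a = y b}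
  have hiS : i ∉ S := fun h => by
    simp only [S, Set.mem_ofPred_eq, hyi] at h
    linarith [hmax k]
  obtain ⟨a, haS, c, hcS, hLac⟩ :=
    hirr Sᶜ ⟨i, hiS⟩ fun h => (h ▸ Set.mem_univ b : b ∈ Sᶜ) rfl
  rw [compl_compl] at hcS
  have hac : a ≠ c := fun h => haS (h ▸ hcS)
  -- Since the columns of `L` sum to zero, column `c` of `y ᵥ* L = 0` reads
  -- `∑ l, (y c - y l) * L l c = 0`, a sum of nonnegative terms as `y c` is maximal.
  have hsum : ∑ l, (y c - y l) * L l c = 0 := by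
    have := hy c fun h => hiS (h ▸ hcS)
    simp only [vecMul, dotProduct] at this
    simp only [sub_mul, Finset.sum_sub_distrib, ← Finset.mul_sum, hcol, mul_zero, this, sub_zero]
  have hterm : ∀ l, 0 ≤ (y c - y l) * L l c := by
    intro l
    rcases eq_or_ne l c with rfl | hlc
    · simp
    · exact mul_nonneg (by linarith [hmax l, show y c = y b from hcS]) (hess l c hlc)
  have hpos : 0 < (y c - y a) * L a c :=
    mul_pos (by linarith [lt_of_le_of_ne (hmax a) haS, show y c = y b from hcS])
      (lt_of_le_of_ne (hess a c hac) (Ne.symm hLac))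
  exact hpos.ne' ((Finset.sum_eq_zero_iff_of_nonneg fun l _ => hterm l).1 hsum a
    (Finset.mem_univ a))

theorem eq_zero_of_vecMul_eq_zero_of_ne (hess : ∀ i j, i ≠ j → 0 ≤ L i j)
    (hirr : IsIrreducibleMatrix L) (hcol : ∀ j, ∑ i, L i j = 0) {y : Fin m → ℝ} {i : Fin m}
    (hyi : y i = 0) (hy : ∀ c, c ≠ i → (y ᵥ* L) c = 0) : y = 0 := by
  have hneg : ∀ k, (-y) k ≤ 0 :=
    nonpos_of_vecMul_eq_zero_of_ne hess hirr hcol (i := i) (by simp [hyi])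
      fun c hc => by simp [neg_vecMul, hy c hc]
  funext k
  exact le_antisymm (nonpos_of_vecMul_eq_zero_of_ne hess hirr hcol hyi hy k)
    (neg_nonpos.1 (hneg k))

theorem adjugate_apply_eq_adjugate_apply_self (hess : ∀ i j, i ≠ j → 0 ≤ L i j)
    (hirr : IsIrreducibleMatrix L) (hcol : ∀ j, ∑ i, L i j = 0) (i j : Fin m) :
    L.adjugate i j = L.adjugate i i := by
  have : Nonempty (Fin m) := ⟨i⟩
  have hdet : L.det = 0 := det_eq_zero_of_colSum_eq_zero hcol
  have hw : (fun a => L.adjugate i a - L.adjugate i i) = 0 := by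
    refine eq_zero_of_vecMul_eq_zero_of_ne hess hirr hcol (i := i) (sub_self _) fun c _ => ?_
    have := congrFun₂ (adjugate_mul L) i c
    simp only [hdet, zero_smul, mul_apply, Matrix.zero_apply] at this
    simp [vecMul, dotProduct, sub_mul, Finset.sum_sub_distrib, ← Finset.mul_sum, hcol, this]
  exact sub_eq_zero.1 (congrFun hw j)

theorem pos_or_neg_of_mulVec_eq_zero (hess : ∀ i j, i ≠ j → 0 ≤ L i j)
    (hirr : IsIrreducibleMatrix L) (hcol : ∀ j, ∑ i, L i j = 0) {c : Fin m → ℝ}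
    (hLc : L *ᵥ c = 0) (hc : ∀ i, c i ≠ 0) : (∀ i, 0 < c i) ∨ ∀ i, c i < 0 := by
  classical
  by_contra! h
  obtain ⟨⟨i, hi⟩, ⟨j, hj⟩⟩ := h
  set S : Finset (Fin m) := Finset.univ.filter fun k => 0 < c k
  have hmem : ∀ k, k ∈ S ↔ 0 < c k := by simp [S]
  obtain ⟨a, haS, b, hbS, hLab⟩ := hirr S ⟨j, (hmem j).2 (hj.lt_of_ne' (hc j))⟩
    fun h => absurd ((hmem i).1 (h ▸ Set.mem_univ i : i ∈ (S : Set (Fin m)))) hi.not_gt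
  rw [Finset.mem_coe] at haS
  rw [Set.mem_compl_iff, Finset.mem_coe] at hbS
  have hb : c b < 0 := lt_of_le_of_ne (not_lt.1 ((hmem b).not.1 hbS)) (hc b)
  -- Summing the equations `(L *ᵥ c) a = 0` over `a ∈ S` gives `∑ l, c l * ∑ a ∈ S, L a l = 0`;
  -- each summand is `≤ 0`, and the one at `b` is `< 0`.
  have hsum : ∑ l, c l * ∑ a ∈ S, L a l = 0 := by
    simp only [Finset.mul_sum]
    rw [Finset.sum_comm]
    refine Finset.sum_eq_zero fun a _ => ?_
    simpa [mulVec, dotProduct, mul_comm] using congrFun hLc a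
  have hterm : ∀ l, c l * ∑ a ∈ S, L a l ≤ 0 := by
    intro l
    by_cases hl : l ∈ S
    · have hsplit := Finset.sum_add_sum_compl S fun a => L a l
      have hout : 0 ≤ ∑ a ∈ Sᶜ, L a l :=
        Finset.sum_nonneg fun a ha => hess a l fun h => Finset.mem_compl.1 ha (h ▸ hl)
      rw [hcol] at hsplit
      exact mul_nonpos_of_nonneg_of_nonpos ((hmem l).1 hl).le (by linarith)
    · exact mul_nonpos_of_nonpos_of_nonneg (not_lt.1 ((hmem l).not.1 hl))
        (Finset.sum_nonneg fun a ha => hess a l fun h => hl (h ▸ ha))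
  have hb' : c b * ∑ a ∈ S, L a b < 0 := by
    refine mul_neg_of_neg_of_pos hb
      (lt_of_lt_of_le (lt_of_le_of_ne (hess a b fun h => hbS (h ▸ haS)) (Ne.symm hLab)) ?_)
    exact Finset.single_le_sum (fun k hk => hess k b fun h => hbS (h ▸ hk)) haS
  have := Finset.sum_lt_sum (s := Finset.univ) (fun l _ => hterm l) ⟨b, Finset.mem_univ b, hb'⟩
  simp [hsum] at this

theorem mulVec_adjugate_diag_eq_zero (hess : ∀ i j, i ≠ j → 0 ≤ L i j)
    (hirr : IsIrreducibleMatrix L) (hcol : ∀ j, ∑ i, L i j = 0) :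
    L *ᵥ (fun i => L.adjugate i i) = 0 := by
  funext k
  have : Nonempty (Fin m) := ⟨k⟩
  have h := congrFun₂ (mul_adjugate L) k k
  rw [det_eq_zero_of_colSum_eq_zero hcol, zero_smul, mul_apply] at h
  simpa [mulVec, dotProduct, adjugate_apply_eq_adjugate_apply_self hess hirr hcol _ k] using h

theorem adjugate_apply_self_ne_zero (hess : ∀ i j, i ≠ j → 0 ≤ L i j)
    (hirr : IsIrreducibleMatrix L) (hcol : ∀ j, ∑ i, L i j = 0) (i : Fin m) :
    L.adjugate i i ≠ 0 := by
  cases m with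
  | zero => exact i.elim0
  | succ n =>
    rw [adjugate_fin_succ_eq_det_submatrix]
    refine mul_ne_zero (pow_ne_zero _ (by norm_num)) fun hdet => ?_
    obtain ⟨x, hx, hxM⟩ := exists_vecMul_eq_zero_iff.mpr hdet
    have hy := eq_zero_of_vecMul_eq_zero_of_ne hess hirr hcol (y := i.insertNth 0 x) (i := i)
      (by simp) fun c hc => ?_
    · exact hx (funext fun k => by simpa using congrFun hy (i.succAbove k))
    · obtain ⟨j, rfl⟩ := Fin.exists_succAbove_eq hc
      simpa [vecMul, dotProduct, Fin.sum_univ_succAbove _ i] using congrFun hxM j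

end EssentiallyNonnegative

theorem tendsto_inv_diagonal_sub_smul {ι : Type*} [Fintype ι] [DecidableEq ι] {L : Matrix ι ι ℝ}
    (hcol : ∀ j, ∑ i, L i j = 0) (γ : ι → ℝ) {i j : ι} (hs : ∑ k, γ k * L.adjugate k j ≠ 0) :
    Tendsto (fun d : ℝ => (diagonal γ - d • L)⁻¹ i j) atTop
      (𝓝 (L.adjugate i j / ∑ k, γ k * L.adjugate k j)) := by
  set r : ℝ → ℝ := fun t =>
    (L - t • diagonal γ).adjugate i j / ∑ k, γ k * (L - t • diagonal γ).adjugate k j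
  have hcont : ContinuousAt r 0 := by
    have hB : Continuous fun t : ℝ => L - t • diagonal γ :=
      continuous_const.sub (continuous_id.smul continuous_const)
    refine (hB.matrix_adjugate.matrix_elem i j).continuousAt.div ?_ (by simpa using hs)
    exact (continuous_finsetSum _ fun k _ =>
      continuous_const.mul (hB.matrix_adjugate.matrix_elem k j)).continuousAt
  have hr : ∀ d : ℝ, d ≠ 0 → (diagonal γ - d • L)⁻¹ i j = r d⁻¹ := by
    intro d hd
    have hV : diagonal γ - d • L = (-d) • (L - d⁻¹ • diagonal γ) := by
      rw [smul_sub, smul_smul, neg_mul, mul_inv_cancel₀ hd, neg_smul, neg_smul, one_smul,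
        sub_neg_eq_add, neg_add_eq_sub]
    have hcolV : ∀ k, ∑ l, (diagonal γ - d • L) l k = γ k := by
      intro k
      simp [Finset.sum_sub_distrib, ← Finset.mul_sum, hcol, diagonal_apply]
    rw [inv_apply_eq_div_sum_colSum_mul_adjugate]
    simp only [hcolV]
    rw [hV, adjugate_smul]
    simp only [Matrix.smul_apply, smul_eq_mul, mul_left_comm (γ _), ← Finset.mul_sum]
    exact mul_div_mul_left _ _ (pow_ne_zero _ (neg_ne_zero.2 hd))
  have h0 : r 0 = L.adjugate i j / ∑ k, γ k * L.adjugate k j := by simp [r]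
  rw [← h0]
  refine (hcont.tendsto.comp tendsto_inv_atTop_zero).congr' ?_
  filter_upwards [eventually_ne_atTop 0] with d hd
  exact (hr d hd).symm

theorem Vinv_tendsto_atTop_general {n : ℕ}
    (L : Matrix (Fin (n+1)) (Fin (n+1)) ℝ)
    (hess : ∀ i j, i ≠ j → 0 ≤ L i j)
    (hirr : IsIrreducibleMatrix L)
    (hcol : ∀ j, ∑ i, L i j = 0)
    (γ : Fin (n+1) → ℝ) (hγ : ∀ i, 0 < γ i) :
    (∀ i j, Filter.Tendsto (fun d : ℝ => ((Matrix.diagonal γ - d • L)⁻¹) i j)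
      Filter.atTop
      (nhds (((1 / ∑ k, γ k * cofactor L k k) • L.adjugate) i j))) ∧
    (∀ i j, 0 < ((1 / ∑ k, γ k * cofactor L k k) • L.adjugate) i j) ∧
    ((1 / ∑ k, γ k * cofactor L k k) • L.adjugate).rank = 1 := by
  set c : Fin (n+1) → ℝ := fun i => L.adjugate i i
  have hrow : ∀ i j, L.adjugate i j = c i := adjugate_apply_eq_adjugate_apply_self hess hirr hcol
  set s := ∑ k, γ k * c k
  have hpos : ∀ i, 0 < c i / s := by
    rcases pos_or_neg_of_mulVec_eq_zero hess hirr hcol (mulVec_adjugate_diag_eq_zero hess hirr hcol)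
      (adjugate_apply_self_ne_zero hess hirr hcol) with h | h
    · exact fun i => div_pos (h i)
        (Finset.sum_pos (fun k _ => mul_pos (hγ k) (h k)) Finset.univ_nonempty)
    · exact fun i => div_pos_of_neg_of_neg (h i)
        (Finset.sum_neg (fun k _ => mul_neg_of_pos_of_neg (hγ k) (h k)) Finset.univ_nonempty)
  have hs : s ≠ 0 := fun h => (hpos 0).ne' (by simp [h])
  have hentry : ∀ i j, ((1 / ∑ k, γ k * cofactor L k k) • L.adjugate) i j = c i / s := by
    intro i j
    simp only [cofactor_eq_adjugate_apply, Matrix.smul_apply, smul_eq_mul, hrow, one_div_mul_eq_div]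
    rfl
  refine ⟨fun i j => ?_, fun i j => hentry i j ▸ hpos i, ?_⟩
  · rw [hentry]
    simpa only [hrow] using tendsto_inv_diagonal_sub_smul hcol γ (i := i) (j := j)
      (by simpa only [hrow] using hs)
  · have hvec : (1 / ∑ k, γ k * cofactor L k k) • L.adjugate
        = vecMulVec (fun i => c i / s) (fun _ => 1) := by
      ext i j
      rw [hentry, vecMulVec_apply, mul_one]
    rw [hvec]
    exact rank_vecMulVec_eq_one (fun h => (hpos 0).ne' (congrFun h 0))
      (fun h => one_ne_zero (congrFun h 0))

/-- For an essentially nonnegative, irreducible `L` with zero column sums and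
`D = diag(γ)` with `γ_i > 0`, the inverse `V(d)⁻¹ = (D − d·L)⁻¹` converges entrywise as
`d → ∞` to `V∞⁻¹ = (1/Σ γ_i·C_{ii})·adj(L)`, which is entrywise strictly positive and has
rank one. -/
theorem Vinv_tendsto_atTop {n : ℕ} (hn : 1 ≤ n)
    (L : Matrix (Fin (n+1)) (Fin (n+1)) ℝ)
    (hess : ∀ i j, i ≠ j → 0 ≤ L i j)
    (hirr : IsIrreducibleMatrix L)
    (hcol : ∀ j, ∑ i, L i j = 0)
    (γ : Fin (n+1) → ℝ) (hγ : ∀ i, 0 < γ i)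
    (hV : ∀ d : ℝ, 0 ≤ d → IsUnit (Matrix.diagonal γ - d • L)) :
    (∀ i j, Filter.Tendsto (fun d : ℝ => ((Matrix.diagonal γ - d • L)⁻¹) i j)
      Filter.atTop
      (nhds (((1 / ∑ k, γ k * cofactor L k k) • L.adjugate) i j))) ∧
    (∀ i j, 0 < ((1 / ∑ k, γ k * cofactor L k k) • L.adjugate) i j) ∧
    ((1 / ∑ k, γ k * cofactor L k k) • L.adjugate).rank = 1 :=
  Vinv_tendsto_atTop_general L hess hirr hcol γ hγ
end

section
/- Let n ≥ 2 and let L be an n×n real matrix that is essentially nonnegative (all off-diagonal entries nonnegative), irreducible, and has all column sums equal to zero. Let β_i > 0 and γ_i > 0 for i = 1,…,n with β_i/γ_i ≠ β_j/γ_j for some i ≠ j, set F = diag(β_1,…,β_n), D = diag(γ_1,…,γ_n), V(d) = D − d·L, R0(d) = ρ(F·V(d)⁻¹), and let w_i = (−1)^{n−1}·C_{ii} > 0 where C_{ii} are the diagonal cofactors of L. Suppose Σ_{i=1}^n β_i·w_i ≥ Σ_{i=1}^n γ_i·w_i (high-risk domain). Then R0(d) > 1 for all d ≥ 0. -/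
/-!
For `d > 0` the matrix `F - V(d) = diag(β - γ) + d L` is essentially nonnegative and irreducible,
so it has a Perron eigenpair `(s, u)` with `u > 0`. Pairing the eigen-equation with `w / u`,
where `L w = 0`, gives `s ∑ wᵢ = ∑ (βᵢ - γᵢ) wᵢ + d ∑ (wᵢ / uᵢ) (L u)ᵢ`, and the last sum equals
`∑ Lᵢⱼ wⱼ (t - 1 - log t)` with `t = (uⱼ / wⱼ) / (uᵢ / wᵢ)`, which is nonnegative and vanishes only
when `u` is proportional to `w`. In the high-risk domain this gives `s > 0`, as `s = 0` would
force `β = γ`. Since `V(d)` is an irreducible nonsingular M-matrix, `V⁻¹ > 0`, so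
`V⁻¹ F u = u + s V⁻¹ u > u` and the Perron root of `V⁻¹ F`, which has the spectrum of `F V⁻¹`,
exceeds `1`. For `d = 0`, `F V⁻¹ = diag(β / γ)` and some `βᵢ / γᵢ > 1`.
-/

open Matrix Filter Set Topology

variable {m : ℕ}

namespace IsIrreducibleMatrix

variable {A : Matrix (Fin m) (Fin m) ℝ}

theorem transpose (hA : IsIrreducibleMatrix A) : IsIrreducibleMatrix Aᵀ := by
  intro S hS hSu
  obtain ⟨i, hi, j, hj, hij⟩ := hA Sᶜ (Set.nonempty_compl.2 hSu) (Set.compl_ne_univ.2 hS)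
  exact ⟨j, not_not.1 hj, i, hi, hij⟩

theorem of_ne_zero (hA : IsIrreducibleMatrix A) {B : Matrix (Fin m) (Fin m) ℝ}
    (hB : ∀ i j, i ≠ j → A i j ≠ 0 → B i j ≠ 0) : IsIrreducibleMatrix B := by
  intro S hS hSu
  obtain ⟨i, hi, j, hj, hij⟩ := hA S hS hSu
  exact ⟨i, hi, j, hj, hB i j (fun h => hj (h ▸ hi)) hij⟩

theorem of_forall_ne_zero (hA : ∀ i j, i ≠ j → A i j ≠ 0) : IsIrreducibleMatrix A := by
  intro S ⟨i, hi⟩ hSu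
  obtain ⟨j, hj⟩ := Set.nonempty_compl.2 hSu
  exact ⟨i, hi, j, hj, hA i j fun h => hj (h ▸ hi)⟩

theorem apply_eq_of_forall_ne_zero {α : Type*} (hA : IsIrreducibleMatrix A) {y : Fin m → α}
    (hy : ∀ i j, A i j ≠ 0 → y i = y j) (i j : Fin m) : y i = y j := by
  by_contra hij
  obtain ⟨a, ha, b, hb, hab⟩ := hA {k | y k = y i} ⟨i, rfl⟩
    fun h => hij (Set.eq_univ_iff_forall.1 h j).symm
  exact hb ((hy a b hab).symm.trans ha)

end IsIrreducibleMatrix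

theorem pow_succ_apply_pos {ι : Type*} [Fintype ι] [DecidableEq ι] {P : Matrix ι ι ℝ}
    (hP : ∀ i j, 0 ≤ P i j) {k : ℕ} {i a b : ι} (hia : 0 < (P ^ k) i a) (hab : 0 < P a b) :
    0 < (P ^ (k + 1)) i b := by
  rw [pow_succ, Matrix.mul_apply]
  exact Finset.sum_pos' (fun l _ => mul_nonneg (pow_apply_nonneg hP k i l) (hP l b))
    ⟨a, Finset.mem_univ a, mul_pos hia hab⟩

/-- Row `i` of `P ^ k` has at least `min (k + 1) m` positive entries: the positive diagonal
keeps the support, and irreducibility lets every proper support grow by one index per step. -/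
theorem IsIrreducibleMatrix.pow_apply_pos {P : Matrix (Fin m) (Fin m) ℝ}
    (hirr : IsIrreducibleMatrix P) (hP : ∀ i j, 0 ≤ P i j) (hdiag : ∀ i, 0 < P i i)
    (i j : Fin m) : 0 < (P ^ (m - 1)) i j := by
  let S : ℕ → Finset (Fin m) := fun k => {l | 0 < (P ^ k) i l}
  have hmem : ∀ k l, l ∈ S k ↔ 0 < (P ^ k) i l := fun k l => by simp [S]
  have hmono : ∀ k, S k ⊆ S (k + 1) := fun k l hl =>
    (hmem _ l).2 (pow_succ_apply_pos hP ((hmem k l).1 hl) (hdiag l))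
  have hi : ∀ k, i ∈ S k := by
    intro k
    induction k with
    | zero => simp [S]
    | succ k ih => exact hmono k ih
  have hgrow : ∀ k, S k ≠ Finset.univ → S k ⊂ S (k + 1) := by
    intro k hk
    obtain ⟨a, ha, b, hb, hab⟩ := hirr (S k) ⟨i, hi k⟩ fun h => hk (Finset.coe_eq_univ.1 h)
    refine Finset.ssubset_iff_subset_ne.2 ⟨hmono k, fun h => hb ?_⟩
    rw [Finset.mem_coe, h, hmem]
    exact pow_succ_apply_pos hP ((hmem k a).1 ha) ((hP a b).lt_of_ne' hab)
  have hcard : ∀ k, min (k + 1) m ≤ (S k).card := by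
    intro k
    induction k with
    | zero => have := Finset.card_pos.2 ⟨i, hi 0⟩; omega
    | succ k ih =>
      by_cases hk : S k = Finset.univ
      · have := Finset.card_le_card (hk ▸ hmono k)
        simp only [Finset.card_univ, Fintype.card_fin] at this
        omega
      · have := Finset.card_lt_card (hgrow k hk)
        omega
  have hfull : S (m - 1) = Finset.univ := by
    apply Finset.eq_univ_of_card
    have := Finset.card_le_univ (S (m - 1))
    simp only [Fintype.card_fin] at this ⊢
    have := hcard (m - 1)
    omega
  exact (hmem _ j).1 (hfull ▸ Finset.mem_univ j)

theorem mulVec_apply_pos {ι κ : Type*} [Fintype κ] {Q : Matrix ι κ ℝ} (hQ : ∀ i j, 0 < Q i j)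
    {v : κ → ℝ} (hv : ∀ j, 0 ≤ v j) (hv0 : v ≠ 0) (i : ι) : 0 < (Q *ᵥ v) i := by
  obtain ⟨j, hj⟩ := Function.ne_iff.1 hv0
  exact Finset.sum_pos' (fun k _ => mul_nonneg (hQ i k).le (hv k))
    ⟨j, Finset.mem_univ j, mul_pos (hQ i j) ((hv j).lt_of_ne' hj)⟩

theorem mulVec_apply_pos_of_mem_stdSimplex {ι κ : Type*} [Fintype κ] {Q : Matrix ι κ ℝ}
    (hQ : ∀ i j, 0 < Q i j) {x : κ → ℝ} (hx : x ∈ stdSimplex ℝ κ) (i : ι) : 0 < (Q *ᵥ x) i := by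
  refine mulVec_apply_pos hQ hx.1 (fun h => ?_) i
  simpa [h] using hx.2

section CollatzWielandt

variable {ι : Type*} [Fintype ι] [Nonempty ι] {M Q : Matrix ι ι ℝ}

noncomputable def collatzWielandt (M : Matrix ι ι ℝ) (x : ι → ℝ) : ℝ :=
  Finset.univ.inf' Finset.univ_nonempty fun i => (M *ᵥ x) i / x i

theorem le_collatzWielandt_iff {x : ι → ℝ} (hx : ∀ i, 0 < x i) {r : ℝ} :
    r ≤ collatzWielandt M x ↔ ∀ i, r * x i ≤ (M *ᵥ x) i := by
  simp only [collatzWielandt, Finset.le_inf'_iff, Finset.mem_univ, true_implies,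
    le_div_iff₀ (hx _)]

theorem lt_collatzWielandt_iff {x : ι → ℝ} (hx : ∀ i, 0 < x i) {r : ℝ} :
    r < collatzWielandt M x ↔ ∀ i, r * x i < (M *ᵥ x) i := by
  simp only [collatzWielandt, Finset.lt_inf'_iff, Finset.mem_univ, true_implies,
    lt_div_iff₀ (hx _)]

theorem exists_isMaxOn_collatzWielandt (hQ : ∀ i j, 0 < Q i j) :
    ∃ z ∈ (Q *ᵥ ·) '' stdSimplex ℝ ι,
      IsMaxOn (collatzWielandt M) ((Q *ᵥ ·) '' stdSimplex ℝ ι) z := by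
  classical
  have hcont : ∀ N : Matrix ι ι ℝ, Continuous (N *ᵥ ·) := fun N =>
    N.mulVecLin.continuous_of_finiteDimensional
  refine ((isCompact_stdSimplex ℝ ι).image (hcont Q)).exists_isMaxOn
    ⟨_, Pi.single (Classical.arbitrary ι) 1, single_mem_stdSimplex ℝ _, rfl⟩ ?_
  refine ContinuousOn.finset_inf'_apply _ fun i _ => ((continuous_apply i).comp
    (hcont M)).continuousOn.div (continuous_apply i).continuousOn ?_
  rintro _ ⟨x, hx, rfl⟩
  exact (mulVec_apply_pos_of_mem_stdSimplex hQ hx i).ne'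

/-- Perron's theorem in Collatz–Wielandt form: a maximiser `z` of the Collatz–Wielandt function
over `Q(Δ)` is an eigenvector, since otherwise `Q` would turn `M z - r z ≩ 0` into a strictly
positive vector and `Q z / ∑ z` would do better than `z`. -/
theorem exists_pos_eigenvector_of_commute (hQ : ∀ i j, 0 < Q i j) (hMQ : Commute M Q) :
    ∃ r : ℝ, ∃ x : ι → ℝ, (∀ i, 0 < x i) ∧ M *ᵥ x = r • x := by
  obtain ⟨_, ⟨y, hy, rfl⟩, hmax⟩ := exists_isMaxOn_collatzWielandt (M := M) hQ
  have hz := mulVec_apply_pos_of_mem_stdSimplex hQ hy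
  set z := Q *ᵥ y
  set r := collatzWielandt M z
  refine ⟨r, z, hz, ?_⟩
  by_contra hne
  have hv : ∀ i, 0 ≤ (M *ᵥ z - r • z) i := fun i => by
    simpa using (le_collatzWielandt_iff hz).1 le_rfl i
  have hσ : 0 < ∑ i, z i := Finset.sum_pos (fun i _ => hz i) Finset.univ_nonempty
  have hy' : (∑ i, z i)⁻¹ • z ∈ stdSimplex ℝ ι :=
    ⟨fun i => mul_nonneg (inv_nonneg.2 hσ.le) (hz i).le, by simp [← Finset.mul_sum, hσ.ne']⟩
  have hkey : M *ᵥ (Q *ᵥ (∑ i, z i)⁻¹ • z) - r • (Q *ᵥ (∑ i, z i)⁻¹ • z)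
      = (∑ i, z i)⁻¹ • (Q *ᵥ (M *ᵥ z - r • z)) := by
    rw [mulVec_mulVec, hMQ.eq, ← mulVec_mulVec, mulVec_sub, mulVec_smul, mulVec_smul,
      mulVec_smul, mulVec_smul, smul_sub, smul_comm r]
  have hbetter : r < collatzWielandt M (Q *ᵥ (∑ i, z i)⁻¹ • z) := by
    refine (lt_collatzWielandt_iff (mulVec_apply_pos_of_mem_stdSimplex hQ hy')).2 fun i => ?_
    have h1 := congrFun hkey i
    have h2 := mulVec_apply_pos hQ hv (sub_ne_zero.2 hne) i
    simp only [Pi.sub_apply, Pi.smul_apply, smul_eq_mul] at h1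
    nlinarith [mul_pos (inv_pos.2 hσ) h2]
  exact (hmax ⟨_, hy', rfl⟩).not_gt hbetter

end CollatzWielandt

theorem IsIrreducibleMatrix.exists_pos_eigenvector [NeZero m] {A : Matrix (Fin m) (Fin m) ℝ}
    (hirr : IsIrreducibleMatrix A) (hA : ∀ i j, i ≠ j → 0 ≤ A i j) :
    ∃ r : ℝ, ∃ x : Fin m → ℝ, (∀ i, 0 < x i) ∧ A *ᵥ x = r • x := by
  set c : ℝ := 1 + ∑ k, |A k k|
  have hP : ∀ i j, (c • 1 + A) i j = (if i = j then c else 0) + A i j := fun i j => by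
    simp [Matrix.one_apply]
  have hPdiag : ∀ i, 0 < (c • 1 + A) i i := fun i => by
    rw [hP, if_pos rfl]
    have := Finset.single_le_sum (fun k _ => abs_nonneg (A k k)) (Finset.mem_univ i)
    linarith [neg_abs_le (A i i)]
  have hPnonneg : ∀ i j, 0 ≤ (c • 1 + A) i j := fun i j => by
    rcases eq_or_ne i j with rfl | hij
    · exact (hPdiag i).le
    · simpa [hP, hij] using hA i j hij
  have hPirr : IsIrreducibleMatrix (c • 1 + A) :=
    hirr.of_ne_zero fun i j hij h => by simpa [hP, hij] using h
  exact exists_pos_eigenvector_of_commute (hPirr.pow_apply_pos hPnonneg hPdiag)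
    ((((Commute.one_right A).smul_right c).add_right (Commute.refl A)).pow_right _)

theorem isRoot_charpoly_of_mulVec_eq_smul {ι K : Type*} [Fintype ι] [DecidableEq ι] [Field K]
    {A : Matrix ι ι K} {x : ι → K} {r : K} (hx : x ≠ 0) (hAx : A *ᵥ x = r • x) :
    A.charpoly.IsRoot r := by
  rw [Polynomial.IsRoot, eval_charpoly]
  refine exists_mulVec_eq_zero_iff.1 ⟨x, hx, ?_⟩
  ext i
  simp [sub_mulVec, hAx, scalar_apply]

theorem specRad_eq_of_charpoly_eq {A B : Matrix (Fin m) (Fin m) ℝ}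
    (h : A.charpoly = B.charpoly) : specRad A = specRad B := by
  simp only [specRad, show ∀ C : Matrix (Fin m) (Fin m) ℝ, C.map Complex.ofReal =
    C.map Complex.ofRealHom from fun _ => rfl, charpoly_map, h]

theorem abs_le_specRad_of_isRoot {A : Matrix (Fin m) (Fin m) ℝ} {r : ℝ}
    (h : A.charpoly.IsRoot r) : |r| ≤ specRad A := by
  have hmap : (A.map Complex.ofReal).charpoly = A.charpoly.map Complex.ofRealHom :=
    A.charpoly_map Complex.ofRealHom
  refine le_csSup ?_ ⟨r, by rw [hmap]; exact h.map, by simp⟩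
  rw [hmap]
  exact ((Polynomial.finite_setOfPred_isRoot
    ((charpoly_monic A).map Complex.ofRealHom).ne_zero).image (‖·‖)).bddAbove

section ZMatrix

variable {ι : Type*} [Fintype ι] {W : Matrix ι ι ℝ}

/-- Minimum principle: at a minimal coordinate `j` of `x`, `(x W)ⱼ` is at most
`xⱼ · ∑ᵢ Wᵢⱼ`. -/
theorem nonneg_of_vecMul_nonneg (hoff : ∀ i j, i ≠ j → W i j ≤ 0)
    (hcol : ∀ j, 0 < ∑ i, W i j) {x : ι → ℝ} (hx : ∀ j, 0 ≤ (x ᵥ* W) j) (i : ι) :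
    0 ≤ x i := by
  by_contra! hxi
  obtain ⟨j, -, hj⟩ := Finset.exists_min_image Finset.univ x ⟨i, Finset.mem_univ i⟩
  have hxj : x j < 0 := (hj i (Finset.mem_univ i)).trans_lt hxi
  have hterm : ∀ k, (x k - x j) * W k j ≤ 0 := fun k => by
    rcases eq_or_ne k j with rfl | hkj
    · simp
    · exact mul_nonpos_of_nonneg_of_nonpos (sub_nonneg.2 (hj k (Finset.mem_univ k)))
        (hoff k j hkj)
  have : (x ᵥ* W) j < 0 := calc
    (x ᵥ* W) j = ∑ k, (x k - x j) * W k j + x j * ∑ k, W k j := by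
      simp [vecMul, dotProduct, sub_mul, Finset.mul_sum]
    _ < 0 := add_neg_of_nonpos_of_neg (Finset.sum_nonpos fun k _ => hterm k)
      (mul_neg_of_neg_of_pos hxj (hcol j))
  exact (hx j).not_gt this

theorem det_ne_zero_of_sum_pos [DecidableEq ι] (hoff : ∀ i j, i ≠ j → W i j ≤ 0)
    (hcol : ∀ j, 0 < ∑ i, W i j) : W.det ≠ 0 := by
  intro h
  obtain ⟨x, hx0, hx⟩ := exists_vecMul_eq_zero_iff.2 h
  refine hx0 (funext fun i =>
    le_antisymm ?_ (nonneg_of_vecMul_nonneg hoff hcol (by simp [hx]) i))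
  simpa using nonneg_of_vecMul_nonneg hoff hcol (x := -x) (by simp [neg_vecMul, hx]) i

end ZMatrix

theorem IsIrreducibleMatrix.pos_of_vecMul_nonneg {W : Matrix (Fin m) (Fin m) ℝ}
    (hirr : IsIrreducibleMatrix W) (hoff : ∀ i j, i ≠ j → W i j ≤ 0) {x : Fin m → ℝ}
    (hx : ∀ i, 0 ≤ x i) (hx0 : x ≠ 0) (hxW : ∀ j, 0 ≤ (x ᵥ* W) j) (i : Fin m) : 0 < x i := by
  by_contra! hxi
  obtain ⟨a, ha, b, hb, hba⟩ := hirr.transpose {k | x k = 0} ⟨i, le_antisymm hxi (hx i)⟩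
    fun h => hx0 (funext fun k => Set.eq_univ_iff_forall.1 h k)
  have hba : W b a < 0 := (hoff b a fun h => hb (h ▸ ha)).lt_of_ne hba
  have : (x ᵥ* W) a < 0 := by
    refine Finset.sum_neg' (fun k _ => ?_)
      ⟨b, Finset.mem_univ b, mul_neg_of_pos_of_neg ((hx b).lt_of_ne' hb) hba⟩
    rcases eq_or_ne k a with rfl | hka
    · simp [show x k = 0 from ha]
    · exact mul_nonpos_of_nonneg_of_nonpos (hx k) (hoff k a hka)
  exact (hxW a).not_gt this

theorem IsIrreducibleMatrix.inv_apply_pos {W : Matrix (Fin m) (Fin m) ℝ}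
    (hirr : IsIrreducibleMatrix W) (hoff : ∀ i j, i ≠ j → W i j ≤ 0)
    (hcol : ∀ j, 0 < ∑ i, W i j) (i j : Fin m) : 0 < W⁻¹ i j := by
  have hrow : W⁻¹ i ᵥ* W = Pi.single i 1 := by
    rw [show W⁻¹ i ᵥ* W = (W⁻¹ * W) i from rfl,
      nonsing_inv_mul W (det_ne_zero_of_sum_pos hoff hcol).isUnit]
    exact funext fun k => one_eq_pi_single
  have hrow_nonneg : ∀ k, 0 ≤ (W⁻¹ i ᵥ* W) k := fun k => by
    rw [hrow, Pi.single_apply]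
    split_ifs <;> norm_num
  refine hirr.pos_of_vecMul_nonneg hoff (nonneg_of_vecMul_nonneg hoff hcol hrow_nonneg)
    (fun h => ?_) hrow_nonneg j
  simpa [h] using congrFun hrow i

/-- Maximum principle: along an edge `L b a ≠ 0` entering a maximal coordinate `a`, the column
equation `∑_q (x a - x q) L q a = 0` forces `x b = x a`. -/
theorem IsIrreducibleMatrix.eq_of_vecMul_eq_zero {L : Matrix (Fin m) (Fin m) ℝ}
    (hirr : IsIrreducibleMatrix L) (hess : ∀ i j, i ≠ j → 0 ≤ L i j)
    (hcol : ∀ j, ∑ i, L i j = 0) {x : Fin m → ℝ} (hx : x ᵥ* L = 0) (i j : Fin m) :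
    x i = x j := by
  obtain ⟨k, -, hk⟩ := Finset.exists_max_image Finset.univ x ⟨i, Finset.mem_univ i⟩
  suffices hmax : ∀ l, x l = x k by rw [hmax i, hmax j]
  by_contra! hS
  obtain ⟨a, ha, b, hb, hba⟩ := hirr.transpose {l | x l = x k} ⟨k, rfl⟩
    fun h => (hS.elim fun l hl => hl (Set.eq_univ_iff_forall.1 h l))
  have hcolumn : ∑ q, (x a - x q) * L q a = 0 := by
    simp [sub_mul, Finset.sum_sub_distrib, ← Finset.mul_sum, hcol a,
      show ∑ q, x q * L q a = 0 from congrFun hx a]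
  refine hcolumn.not_gt (Finset.sum_pos' (fun q _ => ?_) ⟨b, Finset.mem_univ b, ?_⟩)
  · rcases eq_or_ne q a with rfl | hqa
    · simp
    · exact mul_nonneg (by rw [show x a = x k from ha]; linarith [hk q (Finset.mem_univ q)])
        (hess q a hqa)
  · have hab : b ≠ a := fun h => hb (h ▸ ha)
    refine mul_pos ?_ ((hess b a hab).lt_of_ne' hba)
    rw [show x a = x k from ha]
    exact sub_pos.2 ((hk b (Finset.mem_univ b)).lt_of_ne hb)

/-- The rows of `adjugate L` are left null vectors of `L`, hence constant, so its diagonal is one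
of its columns and thus lies in the kernel of `L`. -/
theorem IsIrreducibleMatrix.mulVec_cofactor_eq_zero {n : ℕ}
    {L : Matrix (Fin (n + 1)) (Fin (n + 1)) ℝ} (hirr : IsIrreducibleMatrix L)
    (hess : ∀ i j, i ≠ j → 0 ≤ L i j) (hcol : ∀ j, ∑ i, L i j = 0) :
    L *ᵥ (fun i => cofactor L i i) = 0 := by
  have hdet : L.det = 0 :=
    exists_vecMul_eq_zero_iff.1
      ⟨1, one_ne_zero, funext fun j => by simpa [vecMul, dotProduct] using hcol j⟩
  have hrow : ∀ i k, L.adjugate i k = L.adjugate i 0 := fun i k =>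
    hirr.eq_of_vecMul_eq_zero hess hcol (x := L.adjugate i)
      (by rw [show L.adjugate i ᵥ* L = (L.adjugate * L) i from rfl, adjugate_mul, hdet,
        zero_smul]; rfl) k 0
  have hdiag : (fun i => cofactor L i i) = fun i => L.adjugate i 0 := funext fun i => by
    rw [← hrow i i, adjugate_fin_succ_eq_det_submatrix, cofactor]
  rw [hdiag]
  ext p
  show (L * L.adjugate) p 0 = 0
  rw [mul_adjugate, hdet, zero_smul]
  rfl

theorem mul_div_sub_one_sub_log_nonneg {ι : Type*} {L : Matrix ι ι ℝ} {w u : ι → ℝ}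
    (hess : ∀ i j, i ≠ j → 0 ≤ L i j) (hw : ∀ i, 0 < w i)
    (hu : ∀ i, 0 < u i) (i j : ι) :
    0 ≤ L i j * w j * ((u / w) j / (u / w) i - 1 - Real.log ((u / w) j / (u / w) i)) := by
  rcases eq_or_ne i j with rfl | hij
  · simp [div_self (div_pos (hu i) (hw i)).ne']
  · refine mul_nonneg (mul_nonneg (hess i j hij) (hw j).le) ?_
    have hy : ∀ k, 0 < (u / w) k := fun k => div_pos (hu k) (hw k)
    linarith [Real.log_le_sub_one_of_pos (div_pos (hy j) (hy i))]

section Lyapunov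

variable {ι : Type*} [Fintype ι] {L : Matrix ι ι ℝ} {w u : ι → ℝ}

/-- The correction terms `-1 - log (yⱼ / yᵢ)` sum to zero because `L w = 0` and the columns
of `L` sum to zero. -/
theorem sum_div_mul_mulVec_eq (hcol : ∀ j, ∑ i, L i j = 0) (hw0 : L *ᵥ w = 0)
    (hw : ∀ i, 0 < w i) (hu : ∀ i, 0 < u i) :
    ∑ i, w i / u i * (L *ᵥ u) i = ∑ i, ∑ j, L i j * w j *
      ((u / w) j / (u / w) i - 1 - Real.log ((u / w) j / (u / w) i)) := by
  have hy : ∀ i, (u / w) i ≠ 0 := fun i => (div_pos (hu i) (hw i)).ne'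
  have hterm : ∀ i j, L i j * w j *
      ((u / w) j / (u / w) i - 1 - Real.log ((u / w) j / (u / w) i)) =
      w i / u i * (L i j * u j) - L i j * w j - L i j * (w j * Real.log ((u / w) j))
        + L i j * w j * Real.log ((u / w) i) := fun i j => by
    rw [Real.log_div (hy j) (hy i)]
    have := (hu i).ne'; have := (hw i).ne'; have := (hw j).ne'
    simp only [Pi.div_apply]
    field_simp
    ring
  simp only [hterm, Finset.sum_add_distrib, Finset.sum_sub_distrib, ← Finset.sum_mul,
    show ∀ i, ∑ j, L i j * w j = 0 from congrFun hw0, zero_mul, sub_zero, add_zero,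
    ← Finset.mul_sum]
  rw [Finset.sum_comm (f := fun i j => L i j * (w j * Real.log ((u / w) j)))]
  simp [← Finset.sum_mul, hcol, mulVec, dotProduct]

theorem sum_div_mul_mulVec_nonneg (hess : ∀ i j, i ≠ j → 0 ≤ L i j)
    (hcol : ∀ j, ∑ i, L i j = 0) (hw0 : L *ᵥ w = 0) (hw : ∀ i, 0 < w i) (hu : ∀ i, 0 < u i) :
    0 ≤ ∑ i, w i / u i * (L *ᵥ u) i := by
  rw [sum_div_mul_mulVec_eq hcol hw0 hw hu]
  exact Finset.sum_nonneg fun i _ => Finset.sum_nonneg fun j _ =>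
    mul_div_sub_one_sub_log_nonneg hess hw hu i j

theorem div_eq_div_of_sum_div_mul_mulVec_eq_zero (hess : ∀ i j, i ≠ j → 0 ≤ L i j)
    (hcol : ∀ j, ∑ i, L i j = 0) (hw0 : L *ᵥ w = 0) (hw : ∀ i, 0 < w i) (hu : ∀ i, 0 < u i)
    (h : ∑ i, w i / u i * (L *ᵥ u) i = 0) (i j : ι) (hij : L i j ≠ 0) :
    (u / w) i = (u / w) j := by
  rw [sum_div_mul_mulVec_eq hcol hw0 hw hu] at h
  have hterm := (Finset.sum_eq_zero_iff_of_nonneg fun j _ =>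
    mul_div_sub_one_sub_log_nonneg hess hw hu i j).1
    ((Finset.sum_eq_zero_iff_of_nonneg fun i _ => Finset.sum_nonneg fun j _ =>
      mul_div_sub_one_sub_log_nonneg hess hw hu i j).1 h i (Finset.mem_univ i))
    j (Finset.mem_univ j)
  have hy : ∀ k, 0 < (u / w) k := fun k => div_pos (hu k) (hw k)
  have hratio : (u / w) j / (u / w) i = 1 := by
    by_contra hne
    have := Real.log_lt_sub_one_of_pos (div_pos (hy j) (hy i)) hne
    have := (mul_eq_zero.1 hterm).resolve_left (mul_ne_zero hij (hw j).ne')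
    linarith
  exact ((div_eq_one_iff_eq (hy i).ne').1 hratio).symm

end Lyapunov

theorem IsIrreducibleMatrix.mulVec_eq_zero_of_sum_div_mul_mulVec_eq_zero
    {L : Matrix (Fin m) (Fin m) ℝ} (hirr : IsIrreducibleMatrix L)
    (hess : ∀ i j, i ≠ j → 0 ≤ L i j) (hcol : ∀ j, ∑ i, L i j = 0) {w u : Fin m → ℝ}
    (hw0 : L *ᵥ w = 0) (hw : ∀ i, 0 < w i) (hu : ∀ i, 0 < u i)
    (h : ∑ i, w i / u i * (L *ᵥ u) i = 0) : L *ᵥ u = 0 := by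
  rcases isEmpty_or_nonempty (Fin m) with hm | ⟨⟨k⟩⟩
  · exact Subsingleton.elim _ _
  have hy := hirr.apply_eq_of_forall_ne_zero
    (div_eq_div_of_sum_div_mul_mulVec_eq_zero hess hcol hw0 hw hu h)
  have hu' : u = (u / w) k • w := funext fun i => by
    rw [Pi.smul_apply, ← hy i k, Pi.div_apply, smul_eq_mul, div_mul_cancel₀ _ (hw i).ne']
  rw [hu', mulVec_smul, hw0, smul_zero]

theorem IsIrreducibleMatrix.one_lt_specRad_of_lt_mulVec [NeZero m]
    {G : Matrix (Fin m) (Fin m) ℝ} (hirr : IsIrreducibleMatrix G)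
    (hG : ∀ i j, i ≠ j → 0 ≤ G i j) {u : Fin m → ℝ} (hu : ∀ i, 0 < u i)
    (hGu : ∀ i, u i < (G *ᵥ u) i) : 1 < specRad G := by
  obtain ⟨r, ψ, hψ, hGψ⟩ :=
    hirr.transpose.exists_pos_eigenvector fun i j hij => hG j i hij.symm
  have hψu : 0 < ψ ⬝ᵥ u := Finset.sum_pos (fun i _ => mul_pos (hψ i) (hu i)) Finset.univ_nonempty
  have hlt : ψ ⬝ᵥ u < r * (ψ ⬝ᵥ u) := calc
    ψ ⬝ᵥ u < ψ ⬝ᵥ (G *ᵥ u) := Finset.sum_lt_sum_of_nonempty Finset.univ_nonempty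
      fun i _ => mul_lt_mul_of_pos_left (hGu i) (hψ i)
    _ = r * (ψ ⬝ᵥ u) := by
      rw [dotProduct_mulVec, ← mulVec_transpose, hGψ, smul_dotProduct, smul_eq_mul]
  have hr : 1 < r := by nlinarith
  have hroot : G.charpoly.IsRoot r := charpoly_transpose G ▸
    isRoot_charpoly_of_mulVec_eq_smul (fun h => by simpa [h] using hψ 0) hGψ
  exact hr.trans_le ((le_abs_self r).trans (abs_le_specRad_of_isRoot hroot))

theorem one_lt_specRad_diagonal_mul_inv [NeZero m] {V : Matrix (Fin m) (Fin m) ℝ}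
    (hirr : IsIrreducibleMatrix V) (hoff : ∀ i j, i ≠ j → V i j ≤ 0)
    (hcol : ∀ j, 0 < ∑ i, V i j) {β : Fin m → ℝ} (hβ : ∀ i, 0 < β i) {s : ℝ} (hs : 0 < s)
    {u : Fin m → ℝ} (hu : ∀ i, 0 < u i) (hsu : (diagonal β - V) *ᵥ u = s • u) :
    1 < specRad (diagonal β * V⁻¹) := by
  have hV : IsUnit V.det := (det_ne_zero_of_sum_pos hoff hcol).isUnit
  have hVinv := hirr.inv_apply_pos hoff hcol
  have hG : ∀ i j, 0 < (V⁻¹ * diagonal β) i j := fun i j => by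
    rw [mul_diagonal]
    exact mul_pos (hVinv i j) (hβ j)
  have hGu : (V⁻¹ * diagonal β) *ᵥ u = u + s • (V⁻¹ *ᵥ u) := by
    rw [← mulVec_mulVec, show diagonal β *ᵥ u = V *ᵥ u + s • u by rw [← hsu, sub_mulVec]; abel,
      mulVec_add, mulVec_mulVec, nonsing_inv_mul _ hV, one_mulVec, mulVec_smul]
  rw [specRad_eq_of_charpoly_eq (charpoly_mul_comm _ _)]
  refine IsIrreducibleMatrix.one_lt_specRad_of_lt_mulVec
    (IsIrreducibleMatrix.of_forall_ne_zero fun i j _ => (hG i j).ne') (fun i j _ => (hG i j).le)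
    hu fun i => ?_
  rw [hGu]
  simpa using mul_pos hs
    (mulVec_apply_pos hVinv (fun j => (hu j).le) (fun h => by simpa [h] using hu 0) i)

theorem one_lt_specRad_diagonal_mul_inv_diagonal {β γ : Fin m → ℝ} (hγ : ∀ i, 0 < γ i)
    {i : Fin m} (hi : γ i < β i) : 1 < specRad (diagonal β * (diagonal γ)⁻¹) := by
  have hinv : (diagonal γ)⁻¹ = diagonal γ⁻¹ := inv_eq_right_inv <| by
    rw [diagonal_mul_diagonal, ← diagonal_one]
    exact congrArg diagonal (funext fun k => mul_inv_cancel₀ (hγ k).ne')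
  rw [hinv, diagonal_mul_diagonal]
  have hroot := isRoot_charpoly_of_mulVec_eq_smul (A := diagonal fun k => β k * γ⁻¹ k)
    (x := Pi.single i 1) (r := β i * γ⁻¹ i) (by simp) <| by
      ext k
      rcases eq_or_ne k i with rfl | hki <;> simp [*]
  calc 1 < β i * γ⁻¹ i := by simpa [← div_eq_mul_inv] using (one_lt_div (hγ i)).2 hi
    _ ≤ |β i * γ⁻¹ i| := le_abs_self _
    _ ≤ _ := abs_le_specRad_of_isRoot hroot

theorem exists_lt_of_sum_mul_le {ι : Type*} [Fintype ι] {β γ w : ι → ℝ} (hw : ∀ i, 0 < w i)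
    (hne : β ≠ γ) (h : ∑ i, γ i * w i ≤ ∑ i, β i * w i) : ∃ i, γ i < β i := by
  by_contra! hle
  obtain ⟨i, hi⟩ := Function.ne_iff.1 hne
  exact h.not_gt (Finset.sum_lt_sum (fun j _ => mul_le_mul_of_nonneg_right (hle j) (hw j).le)
    ⟨i, Finset.mem_univ i, mul_lt_mul_of_pos_right ((hle i).lt_of_ne hi) (hw i)⟩)

theorem exists_pos_eigenvalue_of_high_risk [NeZero m] {L : Matrix (Fin m) (Fin m) ℝ}
    (hirr : IsIrreducibleMatrix L) (hess : ∀ i j, i ≠ j → 0 ≤ L i j)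
    (hcol : ∀ j, ∑ i, L i j = 0) {w : Fin m → ℝ} (hw : ∀ i, 0 < w i) (hw0 : L *ᵥ w = 0)
    {β γ : Fin m → ℝ} (hβγ : β ≠ γ) (hhigh : ∑ i, γ i * w i ≤ ∑ i, β i * w i) {d : ℝ}
    (hd : 0 < d) : ∃ s : ℝ, 0 < s ∧ ∃ u : Fin m → ℝ,
      (∀ i, 0 < u i) ∧ (diagonal β - (diagonal γ - d • L)) *ᵥ u = s • u := by
  have happly : ∀ u i, ((diagonal β - (diagonal γ - d • L)) *ᵥ u) i =
      (β i - γ i) * u i + d * (L *ᵥ u) i := fun u i => by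
    simp [sub_mulVec, mulVec_diagonal, smul_mulVec]
    ring
  obtain ⟨s, u, hu, hsu⟩ := IsIrreducibleMatrix.exists_pos_eigenvector
    (A := diagonal β - (diagonal γ - d • L))
    (hirr.of_ne_zero fun i j hij h => by simpa [hij, hd.ne'] using h)
    fun i j hij => by simpa [hij] using mul_nonneg hd.le (hess i j hij)
  have hpair : s * ∑ i, w i =
      ∑ i, (β i - γ i) * w i + d * ∑ i, w i / u i * (L *ᵥ u) i := by
    rw [Finset.mul_sum, Finset.mul_sum, ← Finset.sum_add_distrib]
    refine Finset.sum_congr rfl fun i _ => ?_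
    have hi := congrFun hsu i
    rw [happly, Pi.smul_apply, smul_eq_mul] at hi
    have := (hu i).ne'
    calc s * w i = w i / u i * (s * u i) := by field_simp
      _ = _ := by rw [← hi]; field_simp
  have hT := sum_div_mul_mulVec_nonneg hess hcol hw0 hw hu
  have hX : 0 ≤ ∑ i, (β i - γ i) * w i := by
    simpa [sub_mul, Finset.sum_sub_distrib] using hhigh
  have hW : 0 < ∑ i, w i := Finset.sum_pos (fun i _ => hw i) Finset.univ_nonempty
  have hs : 0 ≤ s := nonneg_of_mul_nonneg_left (hpair ▸ add_nonneg hX (mul_nonneg hd.le hT)) hW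
  refine ⟨s, hs.lt_of_ne' fun hs => hβγ ?_, u, hu, hsu⟩
  have hT0 : ∑ i, w i / u i * (L *ᵥ u) i = 0 := by
    refine (mul_eq_zero.1 ?_).resolve_left hd.ne'
    rw [hs, zero_mul] at hpair
    linarith [mul_nonneg hd.le hT]
  have hLu := hirr.mulVec_eq_zero_of_sum_div_mul_mulVec_eq_zero hess hcol hw0 hw hu hT0
  funext i
  have hi := congrFun hsu i
  rw [happly, hLu, hs] at hi
  simp only [Pi.zero_apply, mul_zero, add_zero, Pi.smul_apply, smul_eq_mul, zero_mul] at hi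
  exact sub_eq_zero.1 ((mul_eq_zero.1 hi).resolve_right (hu i).ne')

theorem R0_gt_one_high_risk_general {n : ℕ}
    (L : Matrix (Fin (n+1)) (Fin (n+1)) ℝ)
    (hess : ∀ i j, i ≠ j → 0 ≤ L i j)
    (hirr : IsIrreducibleMatrix L)
    (hcol : ∀ j, ∑ i, L i j = 0)
    (β γ : Fin (n+1) → ℝ) (hβ : ∀ i, 0 < β i) (hγ : ∀ i, 0 < γ i)
    (hhet : ∃ i j, i ≠ j ∧ β i / γ i ≠ β j / γ j)
    (w : Fin (n+1) → ℝ) (hw : ∀ i, w i = (-1 : ℝ) ^ n * cofactor L i i)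
    (hwpos : ∀ i, 0 < w i)
    (hhigh : ∑ i, γ i * w i ≤ ∑ i, β i * w i) :
    ∀ d : ℝ, 0 ≤ d →
      1 < specRad (Matrix.diagonal β * (Matrix.diagonal γ - d • L)⁻¹) := by
  intro d hd
  have hβγ : β ≠ γ := by
    rintro rfl
    obtain ⟨i, j, -, hij⟩ := hhet
    exact hij (by rw [div_self (hγ i).ne', div_self (hγ j).ne'])
  rcases hd.eq_or_lt with rfl | hd
  · obtain ⟨i, hi⟩ := exists_lt_of_sum_mul_le hwpos hβγ hhigh
    simpa using one_lt_specRad_diagonal_mul_inv_diagonal hγ hi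
  have hw0 : L *ᵥ w = 0 := by
    rw [show w = (-1 : ℝ) ^ n • fun i => cofactor L i i from funext fun i => by simp [hw],
      mulVec_smul, hirr.mulVec_cofactor_eq_zero hess hcol, smul_zero]
  obtain ⟨s, hs, u, hu, hsu⟩ :=
    exists_pos_eigenvalue_of_high_risk hirr hess hcol hwpos hw0 hβγ hhigh hd
  refine one_lt_specRad_diagonal_mul_inv ?_ (fun i j hij => ?_) (fun j => ?_) hβ hs hu hsu
  · exact hirr.of_ne_zero fun i j hij h => by simpa [hij, hd.ne'] using h
  · simpa [hij] using mul_nonneg hd.le (hess i j hij)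
  · simpa [Finset.sum_sub_distrib, ← Finset.mul_sum, hcol, diagonal_apply] using hγ j

/-- (high-risk domain) If `Σ β_i·w_i ≥ Σ γ_i·w_i` with `w_i = (-1)^n·C_{ii} > 0`,
then `R0(d) > 1` for all `d ≥ 0`. -/
theorem R0_gt_one_high_risk {n : ℕ} (hn : 1 ≤ n)
    (L : Matrix (Fin (n+1)) (Fin (n+1)) ℝ)
    (hess : ∀ i j, i ≠ j → 0 ≤ L i j)
    (hirr : IsIrreducibleMatrix L)
    (hcol : ∀ j, ∑ i, L i j = 0)
    (β γ : Fin (n+1) → ℝ) (hβ : ∀ i, 0 < β i) (hγ : ∀ i, 0 < γ i)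
    (hhet : ∃ i j, i ≠ j ∧ β i / γ i ≠ β j / γ j)
    (w : Fin (n+1) → ℝ) (hw : ∀ i, w i = (-1 : ℝ) ^ n * cofactor L i i)
    (hwpos : ∀ i, 0 < w i)
    (hhigh : ∑ i, γ i * w i ≤ ∑ i, β i * w i) :
    ∀ d : ℝ, 0 ≤ d →
      1 < specRad (Matrix.diagonal β * (Matrix.diagonal γ - d • L)⁻¹) :=
  R0_gt_one_high_risk_general L hess hirr hcol β γ hβ hγ hhet w hw hwpos hhigh
end
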